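/- arXiv:1208.4407 — 3 statements merged into one kernel-verified Lean document; each statement's English description precedes it below -/
import Mathlib

section
/- Fix H ∈ (0,1), C > 0, and t > 0. There exists a constant C' > 0 (depending on H, C, t) such that for all real u, ∫₀ᵗ e^{-C u² a^{2H}} da ≤ C' / (1 + |u|^{1/H}). -/
/-!
The integral is at most `t`, since the integrand is at most `1`. It is also at most the integral
over `(0, ∞)`, which the substitution `a ↦ (C u²)^{1/(2H)} a` evaluates to
`(C u²)^{-1/(2H)} Γ(1/(2H) + 1) = K |u|^{-1/H}`. Adding `I ≤ t` and `I |u|^{1/H} ≤ K` gives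
`I (1 + |u|^{1/H}) ≤ t + K`.
-/

open Real MeasureTheory

theorem integrableOn_exp_neg_mul_rpow {p b : ℝ} (hp : 0 < p) (hb : 0 < b) :
    IntegrableOn (fun x : ℝ => exp (-b * x ^ p)) (Set.Ioi 0) := by
  simpa only [rpow_zero, one_mul] using
    integrableOn_rpow_mul_exp_neg_mul_rpow neg_one_lt_zero hp hb

theorem setIntegral_Ioc_exp_mul_rpow_le_self {p b t : ℝ} (hb : b ≤ 0) (ht : 0 ≤ t) :
    ∫ x in Set.Ioc 0 t, exp (b * x ^ p) ≤ t := by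
  have hbound : ∀ x ∈ Set.Ioc (0:ℝ) t, ‖exp (b * x ^ p)‖ ≤ 1 := fun x hx => by
    rw [norm_of_nonneg (exp_nonneg _), exp_le_one_iff]
    exact mul_nonpos_of_nonpos_of_nonneg hb (rpow_nonneg hx.1.le _)
  simpa [ht] using
    (norm_setIntegral_le_of_norm_le_const (measure_Ioc_lt_top (μ := volume)) hbound).trans'
      (le_abs_self _)

theorem setIntegral_Ioc_exp_neg_mul_rpow_le {p b t : ℝ} (hp : 0 < p) (hb : 0 < b) :
    ∫ x in Set.Ioc 0 t, exp (-b * x ^ p) ≤ b ^ (-1 / p) * Gamma (1 / p + 1) := by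
  rw [← integral_exp_neg_mul_rpow hp hb]
  exact setIntegral_mono_set (integrableOn_exp_neg_mul_rpow hp hb)
    (Filter.Eventually.of_forall fun _ => exp_nonneg _) Set.Ioc_subset_Ioi_self.eventuallyLE

theorem setIntegral_Ioc_exp_neg_mul_sq_mul_rpow_mul_le {p c t : ℝ} (hp : 0 < p) (hc : 0 < c)
    (u : ℝ) :
    (∫ x in Set.Ioc 0 t, exp (-c * u ^ 2 * x ^ p)) * |u| ^ (2 / p) ≤
      c ^ (-1 / p) * Gamma (1 / p + 1) := by
  rcases eq_or_ne u 0 with rfl | hu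
  · rw [abs_zero, zero_rpow (by positivity), mul_zero]
    positivity
  have hscale : (c * u ^ 2) ^ (-1 / p) * |u| ^ (2 / p) = c ^ (-1 / p) := by
    rw [mul_rpow hc.le (sq_nonneg u), ← sq_abs, ← rpow_two, ← rpow_mul (abs_nonneg u),
      mul_assoc, ← rpow_add (abs_pos.mpr hu), show 2 * (-1 / p) + 2 / p = 0 by ring, rpow_zero,
      mul_one]
  calc (∫ x in Set.Ioc 0 t, exp (-c * u ^ 2 * x ^ p)) * |u| ^ (2 / p)
      ≤ (c * u ^ 2) ^ (-1 / p) * Gamma (1 / p + 1) * |u| ^ (2 / p) := by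
        gcongr
        simpa only [neg_mul] using setIntegral_Ioc_exp_neg_mul_rpow_le hp (by positivity)
    _ = c ^ (-1 / p) * Gamma (1 / p + 1) := by rw [← hscale]; ring

theorem stmt_2_general (H C t : ℝ) (hH0 : 0 < H) (hC : 0 < C) (ht : 0 < t) :
    ∃ C' > (0:ℝ), ∀ u : ℝ,
      (∫ a in Set.Ioc (0:ℝ) t, Real.exp (-C * u ^ 2 * a ^ (2 * H))) ≤
        C' / (1 + |u| ^ (1 / H)) := by
  set K := C ^ (-1 / (2 * H)) * Gamma (1 / (2 * H) + 1)
  refine ⟨t + K, by positivity, fun u => ?_⟩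
  set I := ∫ a in Set.Ioc (0:ℝ) t, Real.exp (-C * u ^ 2 * a ^ (2 * H))
  have hI_le : I ≤ t := setIntegral_Ioc_exp_mul_rpow_le_self (by nlinarith [sq_nonneg u]) ht.le
  have hI_mul_le : I * |u| ^ (1 / H) ≤ K := by
    have h := setIntegral_Ioc_exp_neg_mul_sq_mul_rpow_mul_le (t := t) (p := 2 * H) (by positivity) hC u
    rwa [show 2 / (2 * H) = 1 / H by field_simp] at h
  rw [le_div_iff₀ (by positivity)]
  linarith

theorem stmt_2 (H C t : ℝ) (hH0 : 0 < H) (hH1 : H < 1) (hC : 0 < C) (ht : 0 < t) :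
    ∃ C' > (0:ℝ), ∀ u : ℝ,
      (∫ a in Set.Ioc (0:ℝ) t, Real.exp (-C * u ^ 2 * a ^ (2 * H))) ≤
        C' / (1 + |u| ^ (1 / H)) :=
  stmt_2_general H C t hH0 hC ht
end

section
/- Let H ∈ (1/3, 2/3) and t > 0, and define F(y) := -(y/√(2π)) ∫₀ᵗ ∫₀ˢ (s-r)^{-3H} exp(-y²/(2(s-r)^{2H})) dr ds for y > 0. Then lim_{y → 0⁺} F(y)/y^{1/H - 2} = -(t/√(2π)) ∫₀^∞ v^{-3H} exp(-v^{-2H}/2) dv, and the limit integral is finite. -/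
open Real MeasureTheory Filter Set
open scoped Nat Topology

/-!
Substituting `s - r = c v` with `c = y ^ (1 / H)` makes the inner integral equal to
`c ^ (1 - 3H) ∫₀^{s/c} g`, where `g v = v ^ (-3H) exp (-v ^ (-2H) / 2)` is the limit integrand, and
`y c ^ (1 - 3H) = y ^ (1 / H - 2)`. Hence `F y / y ^ (1 / H - 2)` is `-(1/√(2π)) ∫₀ᵗ G (s / c) ds`
with `G` the primitive of `g`. As `y → 0⁺`, `s / c → ∞`, and since `g ≥ 0` is integrable on
`(0, ∞)` (bounded near `0`, `O(v ^ (-3H))` with `3H > 1` at infinity), dominated convergence gives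
the limit `-(t/√(2π)) ∫₀^∞ g`.
-/

lemma rpow_mul_exp_neg_half_le (p : ℝ) {x : ℝ} (hx : 1 ≤ x) :
    x ^ p * exp (-x / 2) ≤ ⌈p⌉₊ ! * 2 ^ ⌈p⌉₊ := by
  set n := ⌈p⌉₊
  have hpow : x ^ p ≤ x ^ n := by
    rw [← rpow_natCast]
    exact rpow_le_rpow_of_exponent_le hx (Nat.le_ceil p)
  have hexp : x ^ n ≤ n ! * 2 ^ n * exp (x / 2) := by
    have h := pow_div_factorial_le_exp (x := x / 2) (by linarith) n
    rw [div_pow, div_div, div_le_iff₀ (by positivity)] at h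
    linarith
  calc x ^ p * exp (-x / 2) ≤ n ! * 2 ^ n * exp (x / 2) * exp (-x / 2) := by
        gcongr; exact hpow.trans hexp
    _ = n ! * 2 ^ n := by
        rw [mul_assoc, ← exp_add, show x / 2 + -x / 2 = 0 by ring, exp_zero, mul_one]

lemma integrableOn_rpow_neg_mul_exp_neg_rpow_neg {a b : ℝ} (ha : 1 < a) (hb : 0 < b) :
    IntegrableOn (fun v : ℝ => v ^ (-a) * exp (-(v ^ (-b)) / 2)) (Ioi 0) := by
  have hcont : ContinuousOn (fun v : ℝ => v ^ (-a) * exp (-(v ^ (-b)) / 2)) (Ioi 0) :=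
    ContinuousOn.mul (continuousOn_id.rpow_const fun v hv => Or.inl (ne_of_gt hv))
      ((continuousOn_id.rpow_const fun v hv => Or.inl (ne_of_gt hv)).neg.div_const 2).rexp
  rw [← Ioc_union_Ioi_eq_Ioi zero_le_one]
  refine IntegrableOn.union ?_ ?_
  · refine Integrable.mono' (integrableOn_const (C := (⌈a / b⌉₊ ! * 2 ^ ⌈a / b⌉₊ : ℝ))
      measure_Ioc_lt_top.ne)
      ((hcont.mono Ioc_subset_Ioi_self).aestronglyMeasurable measurableSet_Ioc) ?_
    refine (ae_restrict_iff' measurableSet_Ioc).2 (Eventually.of_forall fun v ⟨hv0, hv1⟩ => ?_)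
    have hx : 1 ≤ v ^ (-b) := one_le_rpow_of_pos_of_le_one_of_nonpos hv0 hv1 (by linarith)
    have hpow : v ^ (-a) = (v ^ (-b)) ^ (a / b) := by
      rw [← rpow_mul hv0.le]; congr 1; field_simp
    rw [norm_of_nonneg (by positivity), hpow]
    exact rpow_mul_exp_neg_half_le _ hx
  · refine Integrable.mono' (integrableOn_Ioi_rpow_of_lt (a := -a) (by linarith) one_pos)
      ((hcont.mono (Ioi_subset_Ioi zero_le_one)).aestronglyMeasurable measurableSet_Ioi) ?_
    refine (ae_restrict_iff' measurableSet_Ioi).2 (Eventually.of_forall fun v (hv : 1 < v) => ?_)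
    have hv0 : 0 ≤ v := by linarith
    have hexp : exp (-(v ^ (-b)) / 2) ≤ 1 := by
      rw [exp_le_one_iff]; have := rpow_nonneg hv0 (-b); linarith
    rw [norm_of_nonneg (by positivity)]
    exact mul_le_of_le_one_right (by positivity) hexp

lemma tendsto_setIntegral_Ioc_div_nhdsGT_zero {f : ℝ → ℝ} (hf : IntegrableOn f (Ioi 0))
    (hf0 : ∀ v ∈ Ioi (0 : ℝ), 0 ≤ f v) {t : ℝ} (ht : 0 ≤ t) :
    Tendsto (fun c => ∫ s in Ioc 0 t, ∫ v in Ioc 0 (s / c), f v) (𝓝[>] 0)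
      (𝓝 (t * ∫ v in Ioi 0, f v)) := by
  set G : ℝ → ℝ := fun x => ∫ v in Ioc 0 x, f v
  have hG_nonneg : ∀ x, 0 ≤ G x := fun x =>
    setIntegral_nonneg measurableSet_Ioc fun v hv => hf0 v hv.1
  have hf_ae : 0 ≤ᵐ[volume.restrict (Ioi 0)] f :=
    (ae_restrict_iff' measurableSet_Ioi).2 (Eventually.of_forall hf0)
  have hG_le : ∀ x, G x ≤ ∫ v in Ioi 0, f v := fun x =>
    setIntegral_mono_set hf hf_ae Ioc_subset_Ioi_self.eventuallyLE
  have hG_mono : Monotone G := fun x₁ x₂ h =>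
    setIntegral_mono_set (hf.mono_set Ioc_subset_Ioi_self)
      ((ae_restrict_iff' measurableSet_Ioc).2 (Eventually.of_forall fun v hv => hf0 v hv.1))
      (Ioc_subset_Ioc_right h).eventuallyLE
  have hG_lim : ∀ s > 0, Tendsto (fun c => G (s / c)) (𝓝[>] 0) (𝓝 (∫ v in Ioi 0, f v)) := by
    intro s hs
    have hdiv : Tendsto (fun c : ℝ => s / c) (𝓝[>] 0) atTop := by
      simpa only [div_eq_mul_inv] using tendsto_inv_nhdsGT_zero.const_mul_atTop hs
    refine (intervalIntegral_tendsto_integral_Ioi 0 hf hdiv).congr' ?_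
    filter_upwards [hdiv.eventually_ge_atTop 0] with c hc
    exact intervalIntegral.integral_of_le hc
  have hDCT := tendsto_integral_filter_of_dominated_convergence (μ := volume.restrict (Ioc 0 t))
    (F := fun c s => G (s / c)) (fun _ => ∫ v in Ioi 0, f v)
    (Eventually.of_forall fun c =>
      (hG_mono.measurable.comp (measurable_id.div_const c)).aestronglyMeasurable)
    (Eventually.of_forall fun c => Eventually.of_forall fun s =>
      (norm_of_nonneg (hG_nonneg _)).trans_le (hG_le _))
    (integrableOn_const (μ := volume) measure_Ioc_lt_top.ne)
    ((ae_restrict_iff' measurableSet_Ioc).2 (Eventually.of_forall fun s hs => hG_lim s hs.1))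
  rwa [setIntegral_const, Real.volume_real_Ioc_of_le ht, sub_zero, smul_eq_mul] at hDCT

lemma setIntegral_Ioc_sub_rpow_mul_exp_eq (a b : ℝ) {c s : ℝ} (hc : 0 < c) (hs : 0 ≤ s) :
    ∫ r in Ioc 0 s, (s - r) ^ (-a) * exp (-c ^ b / (2 * (s - r) ^ b))
      = c ^ (1 - a) * ∫ v in Ioc 0 (s / c), v ^ (-a) * exp (-(v ^ (-b)) / 2) := by
  set K : ℝ → ℝ := fun u => u ^ (-a) * exp (-c ^ b / (2 * u ^ b))
  have hscale : ∀ v ∈ Ioc 0 (s / c),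
      K (c * v) = c ^ (-a) * (v ^ (-a) * exp (-(v ^ (-b)) / 2)) := by
    rintro v ⟨hv, -⟩
    simp only [K, mul_rpow hc.le hv.le, rpow_neg hv.le]
    field_simp
  calc ∫ r in Ioc 0 s, K (s - r)
      = ∫ u in (0)..s, K u := by
        rw [← intervalIntegral.integral_of_le hs, intervalIntegral.integral_comp_sub_left,
          sub_self, sub_zero]
    _ = c * ∫ v in (0)..(s / c), K (c * v) := by
        rw [intervalIntegral.integral_comp_mul_left K hc.ne', mul_zero, mul_div_cancel₀ _ hc.ne',
          smul_eq_mul, mul_inv_cancel_left₀ hc.ne']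
    _ = c * ∫ v in (0)..(s / c), c ^ (-a) * (v ^ (-a) * exp (-(v ^ (-b)) / 2)) := by
        congr 1
        refine intervalIntegral.integral_congr_ae (Eventually.of_forall fun v hv => hscale v ?_)
        rwa [uIoc_of_le (by positivity)] at hv
    _ = c ^ (1 - a) * ∫ v in Ioc 0 (s / c), v ^ (-a) * exp (-(v ^ (-b)) / 2) := by
        rw [intervalIntegral.integral_const_mul, intervalIntegral.integral_of_le (by positivity),
          ← mul_assoc, rpow_sub hc, rpow_one, rpow_neg hc.le, div_eq_mul_inv c]

lemma tendsto_rpow_nhdsGT_zero {p : ℝ} (hp : 0 < p) :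
    Tendsto (fun y : ℝ => y ^ p) (𝓝[>] 0) (𝓝[>] 0) := by
  refine tendsto_nhdsWithin_iff.2
    ⟨?_, eventually_nhdsWithin_of_forall fun y hy => rpow_pos_of_pos hy p⟩
  simpa only [zero_rpow hp.ne'] using
    (continuousAt_rpow_const 0 p (Or.inr hp.le)).tendsto.mono_left nhdsWithin_le_nhds

theorem stmt_9_general (H t : ℝ) (hH1 : 1 / 3 < H) (ht : 0 < t)
    (F : ℝ → ℝ)
    (hF : ∀ y, F y = -(y / Real.sqrt (2 * Real.pi)) *
      ∫ s in Set.Ioc (0:ℝ) t, ∫ r in Set.Ioc (0:ℝ) s,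
        (s - r) ^ (-(3 * H)) * Real.exp (-y ^ 2 / (2 * (s - r) ^ (2 * H)))) :
    IntegrableOn (fun v : ℝ => v ^ (-(3 * H)) * Real.exp (-(v ^ (-(2 * H))) / 2))
        (Set.Ioi 0) ∧
    Tendsto (fun y => F y / y ^ (1 / H - 2)) (nhdsWithin 0 (Set.Ioi 0))
      (nhds (-(t / Real.sqrt (2 * Real.pi)) *
        ∫ v in Set.Ioi (0:ℝ), v ^ (-(3 * H)) * Real.exp (-(v ^ (-(2 * H))) / 2))) := by
  have hH : 0 < H := by linarith
  set g : ℝ → ℝ := fun v => v ^ (-(3 * H)) * exp (-(v ^ (-(2 * H))) / 2)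
  have hg : IntegrableOn g (Ioi 0) :=
    integrableOn_rpow_neg_mul_exp_neg_rpow_neg (by linarith) (by linarith)
  refine ⟨hg, ?_⟩
  have hratio : ∀ y > 0, F y / y ^ (1 / H - 2) =
      -(1 / √(2 * π)) * ∫ s in Ioc 0 t, ∫ v in Ioc 0 (s / y ^ (1 / H)), g v := by
    intro y hy
    have hc : 0 < y ^ (1 / H) := rpow_pos_of_pos hy _
    have hy2 : y ^ 2 = (y ^ (1 / H)) ^ (2 * H) := by
      rw [← rpow_mul hy.le, ← rpow_natCast]; congr 1; field_simp; norm_num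
    have hpow : y * (y ^ (1 / H)) ^ (1 - 3 * H) = y ^ (1 / H - 2) := by
      rw [← rpow_mul hy.le]
      nth_rewrite 1 [← rpow_one y]
      rw [← rpow_add hy]; congr 1; field_simp; ring
    rw [hF, hy2, setIntegral_congr_fun measurableSet_Ioc fun s hs =>
      setIntegral_Ioc_sub_rpow_mul_exp_eq (3 * H) (2 * H) hc hs.1.le, integral_const_mul,
      ← hpow, eq_comm, eq_div_iff (by positivity)]
    ring
  have hlim := ((tendsto_setIntegral_Ioc_div_nhdsGT_zero hg
    (fun v hv => mul_nonneg (rpow_nonneg (le_of_lt hv) _) (exp_nonneg _)) ht.le).comp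
    (tendsto_rpow_nhdsGT_zero (one_div_pos.2 hH))).const_mul (-(1 / √(2 * π)))
  rw [show -(1 / √(2 * π)) * (t * ∫ v in Ioi 0, g v) = -(t / √(2 * π)) * ∫ v in Ioi 0, g v by
    ring] at hlim
  exact hlim.congr' (eventually_nhdsWithin_of_forall fun y hy => (hratio y hy).symm)

theorem stmt_9 (H t : ℝ) (hH1 : 1 / 3 < H) (hH2 : H < 2 / 3) (ht : 0 < t)
    (F : ℝ → ℝ)
    (hF : ∀ y, F y = -(y / Real.sqrt (2 * Real.pi)) *
      ∫ s in Set.Ioc (0:ℝ) t, ∫ r in Set.Ioc (0:ℝ) s,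
        (s - r) ^ (-(3 * H)) * Real.exp (-y ^ 2 / (2 * (s - r) ^ (2 * H)))) :
    IntegrableOn (fun v : ℝ => v ^ (-(3 * H)) * Real.exp (-(v ^ (-(2 * H))) / 2))
        (Set.Ioi 0) ∧
    Tendsto (fun y => F y / y ^ (1 / H - 2)) (nhdsWithin 0 (Set.Ioi 0))
      (nhds (-(t / Real.sqrt (2 * Real.pi)) *
        ∫ v in Set.Ioi (0:ℝ), v ^ (-(3 * H)) * Real.exp (-(v ^ (-(2 * H))) / 2))) :=
  stmt_9_general H t hH1 ht F hF
end

section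
/- Let H = 1/3 and t > 0, and define F(y) := -(y/√(2π)) ∫₀ᵗ ∫₀ˢ (s-r)^{-1} exp(-y²/(2(s-r)^{2/3})) dr ds for y > 0. Then lim_{y → 0⁺} F(y)/(y log y) = 3t/√(2π). -/
open Real MeasureTheory Filter Set Topology

/-!
After the substitution `u = s - r` the inner integral is `G(y, s) = ∫₀ˢ k_y(u) du` with
`k_y(u) = u⁻¹ exp(-y² / (2 u^{2/3}))`. The Gaussian factor gives `k_y(u) ≤ 8 u^{1/3} / y⁴`, so the
range `u ≤ y³` contributes at most `6`, while on `u ≥ y³` we have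
`u⁻¹ - (y²/2) u^{-5/3} ≤ k_y(u) ≤ u⁻¹`, so that range contributes `log (s / y³)` up to `3/4`.
Hence `|G(y, s) + 3 log y| ≤ 6 + |log s|`, which is integrable in `s`, so
`∫₀ᵗ G(y, s) ds = -3 t log y + O(1)` and `F(y) / (y log y) → 3t / √(2π)`.
-/

noncomputable def kernel (y u : ℝ) : ℝ :=
  u⁻¹ * exp (-y ^ 2 / (2 * u ^ ((2 : ℝ) / 3)))

noncomputable def kernelIntegral (y s : ℝ) : ℝ :=
  ∫ u in Ioc 0 s, kernel y u

lemma integrableOn_rpow_Ioc {r : ℝ} (hr : -1 < r) (s : ℝ) :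
    IntegrableOn (fun u : ℝ ↦ u ^ r) (Ioc 0 s) := by
  rcases le_total s 0 with hs | hs
  · simp [Ioc_eq_empty_of_le hs]
  · exact (intervalIntegrable_iff_integrableOn_Ioc_of_le hs).mp
      (intervalIntegral.intervalIntegrable_rpow' hr)

section Kernel

variable {y u : ℝ}

lemma kernel_nonneg (y : ℝ) (hu : 0 ≤ u) : 0 ≤ kernel y u := by
  unfold kernel; positivity

lemma kernel_le_inv (y : ℝ) (hu : 0 ≤ u) : kernel y u ≤ u⁻¹ := by
  refine mul_le_of_le_one_right (inv_nonneg.mpr hu) (exp_le_one_iff.mpr ?_)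
  rw [neg_div]
  exact neg_nonpos.mpr (by positivity)

lemma kernel_le_rpow (hy : 0 < y) (hu : 0 < u) :
    kernel y u ≤ 8 / y ^ 4 * u ^ ((1 : ℝ) / 3) := by
  set x := y ^ 2 / (2 * u ^ ((2 : ℝ) / 3))
  have hx : 0 < x := by positivity
  have hexp : exp (-x) ≤ 2 / x ^ 2 := by
    rw [exp_neg, inv_le_comm₀ (exp_pos x) (by positivity), inv_div]
    nlinarith [quadratic_le_exp_of_nonneg hx.le]
  have hpow : (u ^ ((2 : ℝ) / 3)) ^ 2 = u * u ^ ((1 : ℝ) / 3) := by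
    rw [← rpow_natCast, ← rpow_mul hu.le, ← rpow_one_add' hu.le (by norm_num)]
    norm_num
  calc kernel y u = u⁻¹ * exp (-x) := by rw [kernel, neg_div]
    _ ≤ u⁻¹ * (2 / x ^ 2) := by gcongr
    _ = 8 / y ^ 4 * u ^ ((1 : ℝ) / 3) := by
      simp only [x, div_pow, mul_pow, hpow]
      field_simp
      ring

lemma inv_sub_le_kernel (y : ℝ) (hu : 0 < u) :
    u⁻¹ - y ^ 2 / 2 * u ^ (-(5 : ℝ) / 3) ≤ kernel y u := by
  have hrpow : u ^ (-(5 : ℝ) / 3) = u⁻¹ * (u ^ ((2 : ℝ) / 3))⁻¹ := by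
    rw [← rpow_neg_one, ← rpow_neg hu.le, ← rpow_add hu]
    norm_num
  calc u⁻¹ - y ^ 2 / 2 * u ^ (-(5 : ℝ) / 3)
      = u⁻¹ * (-y ^ 2 / (2 * u ^ ((2 : ℝ) / 3)) + 1) := by rw [hrpow]; ring
    _ ≤ kernel y u := mul_le_mul_of_nonneg_left (add_one_le_exp _) (inv_nonneg.mpr hu.le)

end Kernel

section KernelIntegral

variable {y s : ℝ}

lemma integrableOn_kernel (hy : 0 < y) (s : ℝ) : IntegrableOn (kernel y) (Ioc 0 s) := by
  refine ((integrableOn_rpow_Ioc (r := 1 / 3) (by norm_num) s).const_mul (8 / y ^ 4)).mono'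
    (by unfold kernel; fun_prop) ?_
  filter_upwards [ae_restrict_mem measurableSet_Ioc] with u hu
  rw [norm_of_nonneg (kernel_nonneg y hu.1.le)]
  exact kernel_le_rpow hy hu.1

lemma intervalIntegrable_kernel (hy : 0 < y) {a b : ℝ} (ha : 0 ≤ a) (hb : 0 ≤ b) :
    IntervalIntegrable (kernel y) volume a b :=
  intervalIntegrable_iff.mpr <|
    (integrableOn_kernel hy (max a b)).mono_set (Ioc_subset_Ioc_left (le_min ha hb))

lemma kernelIntegral_nonneg (y s : ℝ) : 0 ≤ kernelIntegral y s :=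
  setIntegral_nonneg measurableSet_Ioc fun _ hu ↦ kernel_nonneg y hu.1.le

lemma kernelIntegral_mono (hy : 0 < y) : Monotone (kernelIntegral y) := fun _ b hab ↦
  setIntegral_mono_set (integrableOn_kernel hy b)
    ((ae_restrict_mem measurableSet_Ioc).mono fun _ hu ↦ kernel_nonneg y hu.1.le)
    (Ioc_subset_Ioc_right hab).eventuallyLE

lemma kernelIntegral_cube_le (hy : 0 < y) : kernelIntegral y (y ^ 3) ≤ 6 := by
  have hy3 : 0 ≤ y ^ 3 := by positivity
  calc kernelIntegral y (y ^ 3)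
      ≤ ∫ u in Ioc 0 (y ^ 3), 8 / y ^ 4 * u ^ ((1 : ℝ) / 3) :=
        setIntegral_mono_on (integrableOn_kernel hy _)
          ((integrableOn_rpow_Ioc (r := 1 / 3) (by norm_num) _).const_mul _) measurableSet_Ioc
          fun u hu ↦ kernel_le_rpow hy hu.1
    _ = 6 := by
      rw [← intervalIntegral.integral_of_le hy3, intervalIntegral.integral_const_mul,
        integral_rpow (Or.inl (by norm_num)), ← rpow_natCast_mul hy.le, zero_rpow (by norm_num)]
      norm_num
      field_simp
      norm_num

lemma kernelIntegral_eq_add (hy : 0 < y) (hs : y ^ 3 ≤ s) :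
    kernelIntegral y s = kernelIntegral y (y ^ 3) + ∫ u in y ^ 3..s, kernel y u := by
  have hy3 : 0 ≤ y ^ 3 := by positivity
  rw [kernelIntegral, kernelIntegral, ← intervalIntegral.integral_of_le (hy3.trans hs),
    ← intervalIntegral.integral_of_le hy3, intervalIntegral.integral_add_adjacent_intervals
      (intervalIntegrable_kernel hy le_rfl hy3) (intervalIntegrable_kernel hy hy3 (hy3.trans hs))]

lemma integral_kernel_le_log (hy : 0 < y) (hs : y ^ 3 ≤ s) :
    ∫ u in y ^ 3..s, kernel y u ≤ log s - 3 * log y := by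
  have hy3 : 0 < y ^ 3 := by positivity
  have hs0 : 0 < s := hy3.trans_le hs
  calc ∫ u in y ^ 3..s, kernel y u ≤ ∫ u in y ^ 3..s, u⁻¹ :=
        intervalIntegral.integral_mono_on hs (intervalIntegrable_kernel hy hy3.le hs0.le)
          (intervalIntegrable_inv_iff.mpr (Or.inr (notMem_uIcc_of_lt hy3 hs0)))
          fun u hu ↦ kernel_le_inv y (hy3.le.trans hu.1)
    _ = log s - 3 * log y := by
      rw [integral_inv_of_pos hy3 hs0, log_div hs0.ne' hy3.ne', log_pow]
      push_cast; ring

lemma log_sub_le_integral_kernel (hy : 0 < y) (hs : y ^ 3 ≤ s) :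
    log s - 3 * log y - 3 / 4 ≤ ∫ u in y ^ 3..s, kernel y u := by
  have hy3 : 0 < y ^ 3 := by positivity
  have hs0 : 0 < s := hy3.trans_le hs
  have h0 : (0 : ℝ) ∉ uIcc (y ^ 3) s := notMem_uIcc_of_lt hy3 hs0
  have hinv : IntervalIntegrable (fun u : ℝ ↦ u⁻¹) volume (y ^ 3) s :=
    intervalIntegrable_inv_iff.mpr (Or.inr h0)
  have hrpow : IntervalIntegrable (fun u : ℝ ↦ u ^ (-(5 : ℝ) / 3)) volume (y ^ 3) s :=
    intervalIntegral.intervalIntegrable_rpow (Or.inr h0)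
  have hcorr : y ^ 2 / 2 * ((s ^ (-(2 : ℝ) / 3) - (y ^ 3) ^ (-(2 : ℝ) / 3)) / (-(2 : ℝ) / 3))
      ≤ 3 / 4 := by
    have hys : (y ^ 3) ^ (-(2 : ℝ) / 3) = (y ^ 2)⁻¹ := by
      rw [← rpow_natCast_mul hy.le, show ((3 : ℕ) : ℝ) * (-(2 : ℝ) / 3) = -(2 : ℕ) by norm_num,
        rpow_neg hy.le, rpow_natCast]
    rw [hys]
    have hs_rpow := rpow_nonneg hs0.le (-(2 : ℝ) / 3)
    field_simp
    nlinarith [mul_nonneg (sq_nonneg y) hs_rpow]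
  calc log s - 3 * log y - 3 / 4
      ≤ log s - 3 * log y -
          y ^ 2 / 2 * ((s ^ (-(2 : ℝ) / 3) - (y ^ 3) ^ (-(2 : ℝ) / 3)) / (-(2 : ℝ) / 3)) := by
        linarith
    _ = ∫ u in y ^ 3..s, (u⁻¹ - y ^ 2 / 2 * u ^ (-(5 : ℝ) / 3)) := by
      rw [intervalIntegral.integral_sub hinv (hrpow.const_mul _),
        intervalIntegral.integral_const_mul, integral_inv_of_pos hy3 hs0,
        log_div hs0.ne' hy3.ne', log_pow,
        integral_rpow (Or.inr ⟨by norm_num, h0⟩)]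
      norm_num
    _ ≤ ∫ u in y ^ 3..s, kernel y u :=
      intervalIntegral.integral_mono_on hs (hinv.sub (hrpow.const_mul _))
        (intervalIntegrable_kernel hy hy3.le hs0.le)
        fun u hu ↦ inv_sub_le_kernel y (hy3.trans_le hu.1)

end KernelIntegral

lemma abs_kernelIntegral_add_three_mul_log_le {y s : ℝ} (hy : 0 < y) (hy1 : y ≤ 1) (hs : 0 < s) :
    |kernelIntegral y s + 3 * log y| ≤ 6 + |log s| := by
  have hcube := kernelIntegral_cube_le hy
  have hlog_s := abs_le.mp (le_refl |log s|)
  rcases le_total (y ^ 3) s with hys | hsy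
  · have hlower := log_sub_le_integral_kernel hy hys
    have hupper := integral_kernel_le_log hy hys
    have hnonneg := kernelIntegral_nonneg y (y ^ 3)
    rw [kernelIntegral_eq_add hy hys, abs_le]
    constructor <;> linarith
  · have hlog : log s ≤ 3 * log y := by simpa [log_pow] using log_le_log hs hsy
    have hlog_y := log_nonpos hy.le hy1
    have hnonneg := kernelIntegral_nonneg y s
    have hmono := kernelIntegral_mono hy hsy
    rw [abs_le]
    constructor <;> linarith

lemma abs_integral_kernelIntegral_add_le {y t : ℝ} (hy : 0 < y) (hy1 : y ≤ 1) (ht : 0 ≤ t) :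
    |(∫ s in Ioc 0 t, kernelIntegral y s) + 3 * t * log y| ≤ ∫ s in Ioc 0 t, (6 + |log s|) := by
  have hG : IntegrableOn (kernelIntegral y) (Ioc 0 t) :=
    (intervalIntegrable_iff_integrableOn_Ioc_of_le ht).mp
      (kernelIntegral_mono hy).intervalIntegrable
  have hlog : IntegrableOn (fun s ↦ 6 + |log s|) (Ioc 0 t) :=
    (integrableOn_const measure_Ioc_lt_top.ne).add
      ((intervalIntegrable_iff_integrableOn_Ioc_of_le ht).mp
        intervalIntegral.intervalIntegrable_log').abs
  have hsplit : (∫ s in Ioc 0 t, kernelIntegral y s) + 3 * t * log y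
      = ∫ s in Ioc 0 t, (kernelIntegral y s + 3 * log y) := by
    rw [integral_add hG (integrableOn_const measure_Ioc_lt_top.ne), setIntegral_const,
      volume_real_Ioc_of_le ht, smul_eq_mul, sub_zero]
    ring
  rw [hsplit, ← norm_eq_abs]
  refine norm_integral_le_of_norm_le hlog ?_
  filter_upwards [ae_restrict_mem measurableSet_Ioc] with s hs
  exact abs_kernelIntegral_add_three_mul_log_le hy hy1 hs.1

lemma tendsto_div_log_of_abs_add_mul_log_le {g : ℝ → ℝ} {c C : ℝ}
    (h : ∀ᶠ y in 𝓝[>] 0, |g y + c * log y| ≤ C) :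
    Tendsto (fun y ↦ g y / log y) (𝓝[>] 0) (𝓝 (-c)) := by
  have hlim : Tendsto (fun y ↦ (g y + c * log y) * (log y)⁻¹ + -c) (𝓝[>] 0) (𝓝 (0 + -c)) :=
    (bdd_le_mul_tendsto_zero' C h tendsto_log_nhdsGT_zero.inv_tendsto_atBot).add_const _
  rw [zero_add] at hlim
  refine hlim.congr' ?_
  filter_upwards [Ioo_mem_nhdsGT (zero_lt_one' ℝ)] with y hy
  have hlog : log y ≠ 0 := (log_neg hy.1 hy.2).ne
  field_simp
  ring

lemma setIntegral_Ioc_comp_sub_left {E : Type*} [NormedAddCommGroup E] [NormedSpace ℝ E]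
    (f : ℝ → E) {s : ℝ} (hs : 0 ≤ s) :
    ∫ r in Ioc 0 s, f (s - r) = ∫ u in Ioc 0 s, f u := by
  rw [← intervalIntegral.integral_of_le hs, ← intervalIntegral.integral_of_le hs,
    intervalIntegral.integral_comp_sub_left, sub_self, sub_zero]

theorem stmt_11 (t : ℝ) (ht : 0 < t)
    (F : ℝ → ℝ)
    (hF : ∀ y, F y = -(y / Real.sqrt (2 * Real.pi)) *
      ∫ s in Set.Ioc (0:ℝ) t, ∫ r in Set.Ioc (0:ℝ) s,
        (s - r)⁻¹ * Real.exp (-y ^ 2 / (2 * (s - r) ^ ((2 : ℝ) / 3)))) :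
    Tendsto (fun y => F y / (y * Real.log y)) (nhdsWithin 0 (Set.Ioi 0))
      (nhds (3 * t / Real.sqrt (2 * Real.pi))) := by
  have hF' (y : ℝ) : F y = -(y / √(2 * π)) * ∫ s in Ioc 0 t, kernelIntegral y s := by
    rw [hF]
    congr 1
    exact setIntegral_congr_fun measurableSet_Ioc fun s hs ↦
      setIntegral_Ioc_comp_sub_left (kernel y) hs.1.le
  have hlim : Tendsto (fun y ↦ (∫ s in Ioc 0 t, kernelIntegral y s) / log y) (𝓝[>] 0)
      (𝓝 (-(3 * t))) := by
    refine tendsto_div_log_of_abs_add_mul_log_le (C := ∫ s in Ioc 0 t, (6 + |log s|)) ?_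
    filter_upwards [Ioc_mem_nhdsGT (zero_lt_one' ℝ)] with y hy
    exact abs_integral_kernelIntegral_add_le hy.1 hy.2 ht.le
  rw [show 3 * t / √(2 * π) = -(√(2 * π))⁻¹ * -(3 * t) by ring]
  refine (hlim.const_mul _).congr' ?_
  filter_upwards [self_mem_nhdsWithin] with y (hy : 0 < y)
  rw [hF']
  field_simp
end
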